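/- arXiv:1506.03040 — 2 statements merged into one kernel-verified Lean document; each statement's English description precedes it below -/
import Mathlib

section
/- Let Φ ∈ ℝ^{M×N} satisfy the (s,γ)-NSP with 0 < γ < 1. Let x ∈ ℝ^N, y ∈ ℝ^M and ε ≥ 0 satisfy ‖y − Φx‖₂ ≤ ε, and let x̂ be a minimizer of ‖x̄‖₁ over all x̄ ∈ ℝ^N with ‖Φx̄ − y‖₂ ≤ ε. Then ‖x̂ − x‖₁ ≤ (4√2·√N/((1−γ)·λ(Φ)))·ε + (4(1+γ)/(√2·(1−γ)))·σ_s(x). -/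
/-!
Write `x̂ - x = v + w` with `v ∈ ker Φ` and `w ⟂ ker Φ`. Both `x̂` and `x` are feasible, so
`‖Φ w‖₂ = ‖Φ (x̂ - x)‖₂ ≤ 2ε`; as `Φ` is injective, hence bounded below, on `(ker Φ)ᗮ`, this gives
`λ(Φ) > 0` unless `w = 0`, and `‖w‖₁ ≤ √N ‖w‖₂ ≤ 2√N ε / λ(Φ)`. Since `x + v = x̂ - w` and `x̂` is
ℓ¹-minimal, `‖x + v‖₁ ≤ ‖x‖₁ + ‖w‖₁`; the null space property turns this into
`(1 - γ) ‖v_{Tᶜ}‖₁ ≤ 2 ‖x_{Tᶜ}‖₁ + ‖w‖₁` for every `|T| ≤ s`, and `‖v_T‖₁ ≤ γ ‖v_{Tᶜ}‖₁` then gives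
`‖x̂ - x‖₁ ≤ 2/(1-γ) ‖w‖₁ + 2(1+γ)/(1-γ) σ_s(x)`, which is at least as strong as the claim.
-/

open scoped BigOperators Matrix

/-- The Euclidean (ℓ²) norm of a real vector. -/
noncomputable def l2norm {ι : Type*} [Fintype ι] (v : ι → ℝ) : ℝ :=
  Real.sqrt (∑ i, (v i) ^ 2)

/-- The ℓ¹ norm of a real vector. -/
noncomputable def l1norm {ι : Type*} [Fintype ι] (v : ι → ℝ) : ℝ :=
  ∑ i, |v i|

/-- `v` has at most `k` nonzero entries. -/
def IsSparse {ι : Type*} {α : Type*} [Zero α] (k : ℕ) (v : ι → α) : Prop :=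
  ∃ T : Finset ι, T.card ≤ k ∧ ∀ i ∉ T, v i = 0

/-- The restricted isometry property of order `k` with constant `δ`. -/
def HasRIP {M N : ℕ} (Φ : Matrix (Fin M) (Fin N) ℝ) (k : ℕ) (δ : ℝ) : Prop :=
  ∀ v : Fin N → ℝ, IsSparse k v →
    (1 - δ) * l2norm v ^ 2 ≤ l2norm (Φ.mulVec v) ^ 2 ∧
      l2norm (Φ.mulVec v) ^ 2 ≤ (1 + δ) * l2norm v ^ 2

/-- `Φ` has the same null space as some matrix with RIP of order `k`, constant `δ`. -/
def HasRIPNSP {M N : ℕ} (Φ : Matrix (Fin M) (Fin N) ℝ) (k : ℕ) (δ : ℝ) : Prop :=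
  ∃ A : Matrix (Fin M) (Fin N) ℝ,
    {v : Fin N → ℝ | A.mulVec v = 0} = {v : Fin N → ℝ | Φ.mulVec v = 0} ∧ HasRIP A k δ

/-- The null space property of order `s` with constant `γ`. -/
def HasNSP {M N : ℕ} (Φ : Matrix (Fin M) (Fin N) ℝ) (s : ℕ) (γ : ℝ) : Prop :=
  ∀ v : Fin N → ℝ, Φ.mulVec v = 0 → ∀ T : Finset (Fin N), T.card ≤ s →
    ∑ i ∈ T, |v i| ≤ γ * ∑ i ∈ Tᶜ, |v i|

/-- `σ_s(x)`: the ℓ¹ distance from `x` to the set of `s`-sparse vectors. -/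
noncomputable def sigmaApprox {N : ℕ} (s : ℕ) (x : Fin N → ℝ) : ℝ :=
  sInf { t : ℝ | ∃ y : Fin N → ℝ, IsSparse s y ∧ t = l1norm (x - y) }

/-- The smallest positive singular value of `Φ`: the infimum of `‖Φx‖₂` over unit
vectors `x` orthogonal to the kernel of `Φ`. -/
noncomputable def smallestPosSV {M N : ℕ} (Φ : Matrix (Fin M) (Fin N) ℝ) : ℝ :=
  sInf { t : ℝ | ∃ x : Fin N → ℝ, l2norm x = 1 ∧
    (∀ y : Fin N → ℝ, Φ.mulVec y = 0 → x ⬝ᵥ y = 0) ∧ t = l2norm (Φ.mulVec x) }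

/-- The operator norm of `Φ` (sup of `‖Φx‖₂` over unit vectors). -/
noncomputable def opNorm {M N : ℕ} (Φ : Matrix (Fin M) (Fin N) ℝ) : ℝ :=
  sSup { t : ℝ | ∃ x : Fin N → ℝ, l2norm x = 1 ∧ t = l2norm (Φ.mulVec x) }

open Matrix WithLp

section Norms

variable {ι : Type*} [Fintype ι]

lemma l2norm_eq_norm_toLp (v : ι → ℝ) : l2norm v = ‖toLp 2 v‖ := by
  simp [EuclideanSpace.norm_eq, l2norm]

lemma l1norm_eq_norm_toLp (v : ι → ℝ) : l1norm v = ‖toLp 1 v‖ := by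
  simp [PiLp.norm_eq_of_L1, l1norm]

@[simp]
lemma l2norm_zero : l2norm (0 : ι → ℝ) = 0 := by
  simp [l2norm]

lemma l2norm_nonneg (v : ι → ℝ) : 0 ≤ l2norm v :=
  Real.sqrt_nonneg _

lemma l2norm_add_le (u v : ι → ℝ) : l2norm (u + v) ≤ l2norm u + l2norm v := by
  simpa only [l2norm_eq_norm_toLp, toLp_add] using norm_add_le _ _

lemma l2norm_sub_comm (u v : ι → ℝ) : l2norm (u - v) = l2norm (v - u) := by
  simpa only [l2norm_eq_norm_toLp, toLp_sub] using norm_sub_rev _ _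

lemma l2norm_smul (c : ℝ) (v : ι → ℝ) : l2norm (c • v) = |c| * l2norm v := by
  simp only [l2norm_eq_norm_toLp, toLp_smul, norm_smul, Real.norm_eq_abs]

lemma l2norm_pos {v : ι → ℝ} (hv : v ≠ 0) : 0 < l2norm v := by
  rw [l2norm_eq_norm_toLp, norm_pos_iff, Ne, toLp_eq_zero]
  exact hv

lemma l2norm_inv_smul_self {v : ι → ℝ} (hv : v ≠ 0) : l2norm ((l2norm v)⁻¹ • v) = 1 := by
  rw [l2norm_smul, abs_inv, abs_of_pos (l2norm_pos hv), inv_mul_cancel₀ (l2norm_pos hv).ne']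

lemma l1norm_nonneg (v : ι → ℝ) : 0 ≤ l1norm v :=
  Finset.sum_nonneg fun i _ ↦ abs_nonneg (v i)

lemma l1norm_add_le (u v : ι → ℝ) : l1norm (u + v) ≤ l1norm u + l1norm v := by
  simpa only [l1norm_eq_norm_toLp, toLp_add] using norm_add_le _ _

lemma l1norm_sub_le (u v : ι → ℝ) : l1norm (u - v) ≤ l1norm u + l1norm v := by
  simpa only [l1norm_eq_norm_toLp, toLp_sub] using norm_sub_le _ _

lemma l1norm_le_sqrt_card_mul_l2norm (v : ι → ℝ) :
    l1norm v ≤ Real.sqrt (Fintype.card ι) * l2norm v := by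
  have hcs := Finset.sum_mul_sq_le_sq_mul_sq Finset.univ (fun _ ↦ (1 : ℝ)) (fun i ↦ |v i|)
  simp only [one_mul, one_pow, sq_abs, Finset.sum_const, Finset.card_univ, nsmul_eq_mul,
    mul_one] at hcs
  rw [l2norm, ← Real.sqrt_mul (Nat.cast_nonneg _), l1norm]
  exact Real.le_sqrt_of_sq_le hcs

end Norms

section KernelDecomposition

variable {m n : Type*} [Fintype n] [DecidableEq n]

lemma toLp_mem_ker_toEuclideanLin_iff (Φ : Matrix m n ℝ) (y : n → ℝ) :
    toLp 2 y ∈ LinearMap.ker (toEuclideanLin Φ) ↔ Φ *ᵥ y = 0 := by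
  rw [LinearMap.mem_ker, toLpLin_apply, toLp_eq_zero]

lemma toLp_mem_orthogonal_ker_iff (Φ : Matrix m n ℝ) (w : n → ℝ) :
    toLp 2 w ∈ (LinearMap.ker (toEuclideanLin Φ))ᗮ ↔ ∀ y, Φ *ᵥ y = 0 → w ⬝ᵥ y = 0 := by
  rw [Submodule.mem_orthogonal']
  refine ⟨fun h y hy ↦ ?_, fun h u hu ↦ ?_⟩
  · rw [dotProduct_comm]
    exact h (toLp 2 y) ((toLp_mem_ker_toEuclideanLin_iff Φ y).2 hy)
  · rw [← toLp_ofLp _ u, toLp_mem_ker_toEuclideanLin_iff] at hu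
    rw [EuclideanSpace.inner_eq_star_dotProduct, star_trivial, dotProduct_comm]
    exact h _ hu

lemma exists_ker_add_orthogonal_ker_eq (Φ : Matrix m n ℝ) (h : n → ℝ) :
    ∃ v w : n → ℝ, Φ *ᵥ v = 0 ∧ (∀ y, Φ *ᵥ y = 0 → w ⬝ᵥ y = 0) ∧ v + w = h := by
  obtain ⟨v, hv, w, hw, hvw⟩ :=
    (LinearMap.ker (toEuclideanLin Φ)).exists_add_mem_mem_orthogonal (toLp 2 h)
  refine ⟨ofLp v, ofLp w, ?_, ?_, ?_⟩
  · rwa [← toLp_mem_ker_toEuclideanLin_iff, toLp_ofLp]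
  · rwa [← toLp_mem_orthogonal_ker_iff, toLp_ofLp]
  · rw [← ofLp_add, ← hvw, ofLp_toLp]

lemma exists_pos_mul_l2norm_le_of_orthogonal_ker [Fintype m] (Φ : Matrix m n ℝ) :
    ∃ c > 0, ∀ w : n → ℝ, (∀ y, Φ *ᵥ y = 0 → w ⬝ᵥ y = 0) → c * l2norm w ≤ l2norm (Φ *ᵥ w) := by
  set K := LinearMap.ker (toEuclideanLin Φ)
  have hinj : LinearMap.ker (toEuclideanLin Φ ∘ₗ Kᗮ.subtype) = ⊥ := by
    rw [LinearMap.ker_comp, ← Submodule.disjoint_iff_comap_eq_bot]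
    exact K.orthogonal_disjoint.symm
  obtain ⟨C, hC, hanti⟩ := (toEuclideanLin Φ ∘ₗ Kᗮ.subtype).exists_antilipschitzWith hinj
  refine ⟨C⁻¹, by positivity, fun w hw ↦ ?_⟩
  have hbound := ZeroHomClass.bound_of_antilipschitz _ hanti
    ⟨toLp 2 w, (toLp_mem_orthogonal_ker_iff Φ w).2 hw⟩
  rw [inv_mul_le_iff₀ (by exact_mod_cast hC), l2norm_eq_norm_toLp, l2norm_eq_norm_toLp]
  exact hbound

end KernelDecomposition

section SmallestSingularValue

variable {M N : ℕ} (Φ : Matrix (Fin M) (Fin N) ℝ)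

lemma smallestPosSV_le {x : Fin N → ℝ} (hx1 : l2norm x = 1)
    (hx : ∀ y, Φ *ᵥ y = 0 → x ⬝ᵥ y = 0) : smallestPosSV Φ ≤ l2norm (Φ *ᵥ x) :=
  csInf_le ⟨0, by rintro _ ⟨z, -, -, rfl⟩; exact l2norm_nonneg _⟩ ⟨x, hx1, hx, rfl⟩

lemma smallestPosSV_nonneg : 0 ≤ smallestPosSV Φ :=
  Real.sInf_nonneg (by rintro _ ⟨z, -, -, rfl⟩; exact l2norm_nonneg _)

lemma smallestPosSV_mul_l2norm_le {w : Fin N → ℝ} (hw : ∀ y, Φ *ᵥ y = 0 → w ⬝ᵥ y = 0) :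
    smallestPosSV Φ * l2norm w ≤ l2norm (Φ *ᵥ w) := by
  rcases eq_or_ne w 0 with rfl | hw0
  · simp
  have hle := smallestPosSV_le Φ (l2norm_inv_smul_self hw0)
    (fun y hy ↦ by rw [smul_dotProduct, hw y hy, smul_zero])
  rwa [mulVec_smul, l2norm_smul, abs_inv, abs_of_pos (l2norm_pos hw0), inv_mul_eq_div,
    le_div_iff₀ (l2norm_pos hw0)] at hle

lemma smallestPosSV_pos {w : Fin N → ℝ} (hw : ∀ y, Φ *ᵥ y = 0 → w ⬝ᵥ y = 0) (hw0 : w ≠ 0) :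
    0 < smallestPosSV Φ := by
  obtain ⟨c, hc, hcΦ⟩ := exists_pos_mul_l2norm_le_of_orthogonal_ker Φ
  have hne : Set.Nonempty {t : ℝ | ∃ x : Fin N → ℝ, l2norm x = 1 ∧
      (∀ y, Φ *ᵥ y = 0 → x ⬝ᵥ y = 0) ∧ t = l2norm (Φ *ᵥ x)} :=
    ⟨_, _, l2norm_inv_smul_self hw0, fun y hy ↦ by rw [smul_dotProduct, hw y hy, smul_zero], rfl⟩
  refine hc.trans_le (le_csInf hne ?_)
  rintro _ ⟨x, hx1, hx, rfl⟩
  simpa [hx1] using hcΦ x hx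

lemma l2norm_le_div_smallestPosSV {w : Fin N → ℝ} (hw : ∀ y, Φ *ᵥ y = 0 → w ⬝ᵥ y = 0) :
    l2norm w ≤ l2norm (Φ *ᵥ w) / smallestPosSV Φ := by
  rcases eq_or_ne w 0 with rfl | hw0
  · simp
  · rw [le_div_iff₀ (smallestPosSV_pos Φ hw hw0), mul_comm]
    exact smallestPosSV_mul_l2norm_le Φ hw

lemma l1norm_le_sqrt_mul_div_smallestPosSV {w : Fin N → ℝ}
    (hw : ∀ y, Φ *ᵥ y = 0 → w ⬝ᵥ y = 0) :
    l1norm w ≤ Real.sqrt N * (l2norm (Φ *ᵥ w) / smallestPosSV Φ) := by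
  grw [← l2norm_le_div_smallestPosSV Φ hw]
  simpa using l1norm_le_sqrt_card_mul_l2norm w

end SmallestSingularValue

section NullSpaceProperty

lemma l1norm_eq_sum_add_sum_compl {ι : Type*} [Fintype ι] [DecidableEq ι] (v : ι → ℝ)
    (T : Finset ι) : l1norm v = ∑ i ∈ T, |v i| + ∑ i ∈ Tᶜ, |v i| :=
  (Finset.sum_add_sum_compl T _).symm

lemma sum_compl_abs_le_of_l1norm_add_le {ι : Type*} [Fintype ι] [DecidableEq ι]
    {x v : ι → ℝ} {T : Finset ι} {γ η : ℝ}
    (hv : ∑ i ∈ T, |v i| ≤ γ * ∑ i ∈ Tᶜ, |v i|) (hxv : l1norm (x + v) ≤ l1norm x + η) :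
    (1 - γ) * ∑ i ∈ Tᶜ, |v i| ≤ 2 * ∑ i ∈ Tᶜ, |x i| + η := by
  have hsplit : ∑ i ∈ T, (|x i| - |v i|) + ∑ i ∈ Tᶜ, (|v i| - |x i|) ≤ l1norm (x + v) := by
    rw [l1norm, ← Finset.sum_add_sum_compl T]
    gcongr with i _ i _
    · simpa using abs_sub_abs_le_abs_sub (x i) (-v i)
    · simpa [add_comm] using abs_sub_abs_le_abs_sub (v i) (-x i)
  rw [l1norm_eq_sum_add_sum_compl x T] at hxv
  simp only [Finset.sum_sub_distrib] at hsplit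
  linarith

variable {s M N : ℕ}

lemma le_sigmaApprox {x : Fin N → ℝ} {c : ℝ}
    (h : ∀ T : Finset (Fin N), T.card ≤ s → c ≤ ∑ i ∈ Tᶜ, |x i|) : c ≤ sigmaApprox s x := by
  refine le_csInf ⟨_, 0, ⟨∅, by simp⟩, rfl⟩ ?_
  rintro _ ⟨z, ⟨T, hT, hz⟩, rfl⟩
  calc c ≤ ∑ i ∈ Tᶜ, |x i| := h T hT
    _ = ∑ i ∈ Tᶜ, |(x - z) i| := Finset.sum_congr rfl fun i hi ↦ by
        rw [Pi.sub_apply, hz i (Finset.mem_compl.1 hi), sub_zero]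
    _ ≤ l1norm (x - z) :=
        Finset.sum_le_sum_of_subset_of_nonneg (Finset.subset_univ _) fun i _ _ ↦ abs_nonneg _

lemma sigmaApprox_nonneg (x : Fin N → ℝ) : 0 ≤ sigmaApprox s x :=
  Real.sInf_nonneg (by rintro _ ⟨z, -, rfl⟩; exact l1norm_nonneg _)

theorem HasNSP.l1norm_add_le_of_l1norm_add_le {Φ : Matrix (Fin M) (Fin N) ℝ} {γ : ℝ}
    (hΦ : HasNSP Φ s γ) (hγ0 : 0 ≤ γ) (hγ1 : γ < 1) {x v w : Fin N → ℝ} (hv : Φ *ᵥ v = 0)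
    (hxv : l1norm (x + v) ≤ l1norm x + l1norm w) :
    l1norm (v + w) ≤ 2 / (1 - γ) * l1norm w + 2 * (1 + γ) / (1 - γ) * sigmaApprox s x := by
  have h1γ : 0 < 1 - γ := sub_pos.2 hγ1
  suffices hT : ∀ T : Finset (Fin N), T.card ≤ s →
      ((1 - γ) * l1norm (v + w) - 2 * l1norm w) / (2 * (1 + γ)) ≤ ∑ i ∈ Tᶜ, |x i| by
    have hσ := le_sigmaApprox hT
    rw [div_le_iff₀ (by positivity)] at hσ
    rw [div_mul_eq_mul_div, div_mul_eq_mul_div, ← add_div, le_div_iff₀ h1γ]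
    linarith
  intro T hT
  rw [div_le_iff₀ (by positivity)]
  have hvT := hΦ v hv T hT
  have hcone := sum_compl_abs_le_of_l1norm_add_le hvT hxv
  have hvw : l1norm (v + w) ≤ (1 + γ) * ∑ i ∈ Tᶜ, |v i| + l1norm w := by
    have := l1norm_add_le v w
    rw [l1norm_eq_sum_add_sum_compl v T] at this
    linarith
  linarith [mul_le_mul_of_nonneg_left hvw h1γ.le,
    mul_le_mul_of_nonneg_left hcone (by linarith : 0 ≤ 1 + γ)]

end NullSpaceProperty

lemma stability_coeffs_le {γ lam n ε a σ : ℝ} (hγ0 : -1 ≤ γ) (hγ1 : γ < 1) (hlam : 0 ≤ lam)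
    (hε : 0 ≤ ε) (hσ : 0 ≤ σ) (ha : a ≤ Real.sqrt n * (2 * ε / lam)) :
    2 / (1 - γ) * a + 2 * (1 + γ) / (1 - γ) * σ ≤
      4 * Real.sqrt 2 * Real.sqrt n / ((1 - γ) * lam) * ε +
        4 * (1 + γ) / (Real.sqrt 2 * (1 - γ)) * σ := by
  have h1γ : 0 < 1 - γ := sub_pos.2 hγ1
  have hsqrt2 : Real.sqrt 2 ≤ 2 := Real.sqrt_le_left zero_le_two |>.2 (by norm_num)
  gcongr ?_ + ?_ * _
  · calc 2 / (1 - γ) * a ≤ 2 / (1 - γ) * (Real.sqrt n * (2 * ε / lam)) := by gcongr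
      _ = 4 * 1 * Real.sqrt n / ((1 - γ) * lam) * ε := by
          rw [div_eq_mul_inv _ ((1 - γ) * _), mul_inv]
          ring
      _ ≤ 4 * Real.sqrt 2 * Real.sqrt n / ((1 - γ) * lam) * ε := by
          gcongr
          exact Real.one_le_sqrt.2 one_le_two
  · rw [div_le_div_iff₀ h1γ (by positivity)]
    nlinarith [mul_le_mul_of_nonneg_left hsqrt2 (mul_nonneg (by linarith : 0 ≤ 1 + γ) h1γ.le)]

/-- **Theorem 2.2 (stability under NSP).**
If `Φ` has the `(s,γ)`-NSP with `0 < γ < 1`, `‖y - Φx‖₂ ≤ ε`, and `x̂` minimizes the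
ℓ¹ norm subject to `‖Φx̄ - y‖₂ ≤ ε`, then
`‖x̂ - x‖₁ ≤ (4√2 √N /((1-γ) λ(Φ))) ε + (4(1+γ)/(√2 (1-γ))) σ_s(x)`. -/
theorem stmt2 {s M N : ℕ} {γ : ℝ} (hγ0 : 0 < γ) (hγ1 : γ < 1)
    {Φ : Matrix (Fin M) (Fin N) ℝ} (hΦ : HasNSP Φ s γ)
    (x : Fin N → ℝ) (y : Fin M → ℝ) (ε : ℝ) (hε : 0 ≤ ε)
    (hxy : l2norm (y - Φ.mulVec x) ≤ ε)
    (xhat : Fin N → ℝ)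
    (hfeas : l2norm (Φ.mulVec xhat - y) ≤ ε)
    (hmin : ∀ z : Fin N → ℝ, l2norm (Φ.mulVec z - y) ≤ ε → l1norm xhat ≤ l1norm z) :
    l1norm (xhat - x) ≤
      (4 * Real.sqrt 2 * Real.sqrt (N : ℝ) / ((1 - γ) * smallestPosSV Φ)) * ε +
        (4 * (1 + γ) / (Real.sqrt 2 * (1 - γ))) * sigmaApprox s x := by
  obtain ⟨v, w, hv, hw, hvw⟩ := exists_ker_add_orthogonal_ker_eq Φ (xhat - x)
  have hxv : l1norm (x + v) ≤ l1norm x + l1norm w :=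
    calc l1norm (x + v) = l1norm (xhat - w) := by
          congr 1
          rw [eq_sub_iff_add_eq, add_assoc, hvw, add_sub_cancel]
      _ ≤ l1norm xhat + l1norm w := l1norm_sub_le _ _
      _ ≤ l1norm x + l1norm w := by grw [hmin x (by rwa [l2norm_sub_comm])]
  have hΦw : l2norm (Φ *ᵥ w) ≤ 2 * ε :=
    calc l2norm (Φ *ᵥ w) = l2norm ((Φ *ᵥ xhat - y) + (y - Φ *ᵥ x)) := by
          rw [sub_add_sub_cancel, ← mulVec_sub, ← hvw, mulVec_add, hv, zero_add]
      _ ≤ 2 * ε := by linarith [l2norm_add_le (Φ *ᵥ xhat - y) (y - Φ *ᵥ x)]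
  have hw1 : l1norm w ≤ Real.sqrt N * (2 * ε / smallestPosSV Φ) := by
    grw [l1norm_le_sqrt_mul_div_smallestPosSV Φ hw, hΦw]
    exact smallestPosSV_nonneg Φ
  calc l1norm (xhat - x) = l1norm (v + w) := by rw [hvw]
    _ ≤ 2 / (1 - γ) * l1norm w + 2 * (1 + γ) / (1 - γ) * sigmaApprox s x :=
        hΦ.l1norm_add_le_of_l1norm_add_le hγ0.le hγ1 hv hxv
    _ ≤ _ := stability_coeffs_le (by linarith) hγ1 (smallestPosSV_nonneg Φ) hε
        (sigmaApprox_nonneg x) hw1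
end

section
/- Let V ⊆ ℝ^N be a linear subspace and s a positive integer. Then the following are equivalent: (i) for every nonzero v ∈ V and every index set T ⊆ {1,...,N} with |T| ≤ s, ‖v_T‖₁ < ‖v_{T^c}‖₁; (ii) there exists γ with 0 < γ < 1 such that for every v ∈ V and every index set T with |T| ≤ s, ‖v_T‖₁ ≤ γ·‖v_{T^c}‖₁. -/
open scoped BigOperators Matrix

/-! For a fixed index set `T`, the ratio `‖v_T‖₁ / ‖v_{Tᶜ}‖₁` is continuous and invariant
under positive scaling on `V ∖ {0}`, so it attains its maximum on the compact unit sphere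
of `V`, and by the strict inequality this maximum is `< 1`. There are finitely many `T`,
so the largest of these maxima is a uniform constant. -/

open Metric Finset

section PositivelyHomogeneous

variable {E : Type*} [NormedAddCommGroup E] [NormedSpace ℝ E] [FiniteDimensional ℝ E]

theorem exists_lt_one_forall_le_mul_of_lt {f g : E → ℝ} (hf : Continuous f) (hg : Continuous g)
    (hf_nonneg : ∀ v, 0 ≤ f v) (hf_smul : ∀ c : ℝ, 0 ≤ c → ∀ v, f (c • v) = c * f v)
    (hg_smul : ∀ c : ℝ, 0 ≤ c → ∀ v, g (c • v) = c * g v) (hlt : ∀ v, v ≠ 0 → f v < g v) :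
    ∃ γ < 1, ∀ v, f v ≤ γ * g v := by
  have hf_zero : f 0 = 0 := by simpa using hf_smul 0 le_rfl 0
  have hg_zero : g 0 = 0 := by simpa using hg_smul 0 le_rfl 0
  rcases subsingleton_or_nontrivial E with hE | hE
  · exact ⟨0, zero_lt_one, fun v => by rw [Subsingleton.elim v 0, hf_zero, zero_mul]⟩
  have hg_pos : ∀ v, v ≠ 0 → 0 < g v := fun v hv => (hf_nonneg v).trans_lt (hlt v hv)
  have hne : ∀ v ∈ sphere (0 : E) 1, v ≠ 0 := fun v hv => ne_zero_of_mem_unit_sphere ⟨v, hv⟩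
  obtain ⟨v₀, hv₀, hmax⟩ := (isCompact_sphere (0 : E) 1).exists_isMaxOn
    (NormedSpace.sphere_nonempty.mpr zero_le_one)
    (hf.continuousOn.div hg.continuousOn fun v hv => (hg_pos v (hne v hv)).ne')
  refine ⟨f v₀ / g v₀, (div_lt_one (hg_pos v₀ (hne v₀ hv₀))).mpr (hlt v₀ (hne v₀ hv₀)),
    fun v => ?_⟩
  rcases eq_or_ne v 0 with rfl | hv
  · rw [hf_zero, hg_zero, mul_zero]
  have hv_norm : ‖v‖⁻¹ ≠ 0 := inv_ne_zero (norm_ne_zero_iff.mpr hv)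
  have hu : ‖v‖⁻¹ • v ∈ sphere (0 : E) 1 := by simp [norm_smul, hv]
  -- the ratio `f / g` is invariant under positive scaling
  have hratio : f v / g v ≤ f v₀ / g v₀ := by
    simpa [hf_smul _ (inv_nonneg.mpr (norm_nonneg v)), hg_smul _ (inv_nonneg.mpr (norm_nonneg v)),
      mul_div_mul_left _ _ hv_norm] using hmax hu
  exact (div_le_iff₀ (hg_pos v hv)).mp hratio

end PositivelyHomogeneous

section NullSpaceProperty

theorem sum_abs_smul {ι : Type*} (T : Finset ι) (c : ℝ) (v : ι → ℝ) :
    ∑ i ∈ T, |(c • v) i| = |c| * ∑ i ∈ T, |v i| := by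
  simp only [Pi.smul_apply, smul_eq_mul, abs_mul, mul_sum]

theorem sum_abs_pos_of_ne_zero {ι : Type*} [Fintype ι] {v : ι → ℝ} (hv : v ≠ 0) :
    0 < ∑ i, |v i| := by
  obtain ⟨i, hi⟩ := Function.ne_iff.mp hv
  exact sum_pos' (fun j _ => abs_nonneg (v j)) ⟨i, mem_univ i, abs_pos.mpr hi⟩

variable {ι : Type*} [Fintype ι] [DecidableEq ι]

theorem exists_lt_one_sum_abs_le_mul_of_lt (V : Submodule ℝ (ι → ℝ)) (T : Finset ι)
    (h : ∀ v ∈ V, v ≠ 0 → ∑ i ∈ T, |v i| < ∑ i ∈ Tᶜ, |v i|) :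
    ∃ γ < 1, ∀ v ∈ V, ∑ i ∈ T, |v i| ≤ γ * ∑ i ∈ Tᶜ, |v i| := by
  have hcont (S : Finset ι) : Continuous fun v : V => ∑ i ∈ S, |(v : ι → ℝ) i| :=
    continuous_finsetSum _ fun i _ => ((continuous_apply i).comp continuous_subtype_val).abs
  have hsmul (S : Finset ι) (c : ℝ) (hc : 0 ≤ c) (v : V) :
      ∑ i ∈ S, |((c • v : V) : ι → ℝ) i| = c * ∑ i ∈ S, |(v : ι → ℝ) i| := by
    rw [Submodule.coe_smul, sum_abs_smul, abs_of_nonneg hc]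
  obtain ⟨γ, hγ, hle⟩ := exists_lt_one_forall_le_mul_of_lt (E := V)
    (f := fun v => ∑ i ∈ T, |(v : ι → ℝ) i|) (g := fun v => ∑ i ∈ Tᶜ, |(v : ι → ℝ) i|)
    (hcont T) (hcont Tᶜ) (fun v => sum_nonneg fun i _ => abs_nonneg _)
    (hsmul T) (hsmul Tᶜ) fun v hv => h v v.2 (by simpa using hv)
  exact ⟨γ, hγ, fun v hv => hle ⟨v, hv⟩⟩

theorem exists_nsp_constant_of_strict (V : Submodule ℝ (ι → ℝ)) (s : ℕ)
    (h : ∀ v ∈ V, v ≠ 0 → ∀ T : Finset ι, T.card ≤ s → ∑ i ∈ T, |v i| < ∑ i ∈ Tᶜ, |v i|) :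
    ∃ γ : ℝ, 0 < γ ∧ γ < 1 ∧ ∀ v ∈ V, ∀ T : Finset ι, T.card ≤ s →
      ∑ i ∈ T, |v i| ≤ γ * ∑ i ∈ Tᶜ, |v i| := by
  have hT : ∀ T : Finset ι, ∃ γ < 1, T.card ≤ s → ∀ v ∈ V,
      ∑ i ∈ T, |v i| ≤ γ * ∑ i ∈ Tᶜ, |v i| := by
    intro T
    by_cases hT : T.card ≤ s
    · obtain ⟨γ, hγ, hle⟩ :=
        exists_lt_one_sum_abs_le_mul_of_lt V T fun v hv hv0 => h v hv hv0 T hT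
      exact ⟨γ, hγ, fun _ => hle⟩
    · exact ⟨0, zero_lt_one, fun h => absurd h hT⟩
  choose γ hγ_lt hγ using hT
  obtain ⟨T₀, hT₀⟩ := Finite.exists_max γ
  refine ⟨max (1 / 2) (γ T₀), by positivity, max_lt (by norm_num) (hγ_lt T₀),
    fun v hv T hT => (hγ T hT v hv).trans ?_⟩
  exact mul_le_mul_of_nonneg_right ((hT₀ T).trans (le_max_right _ _))
    (sum_nonneg fun i _ => abs_nonneg _)

theorem strict_of_nsp_constant {V : Submodule ℝ (ι → ℝ)} {s : ℕ} {γ : ℝ} (hγ : γ < 1)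
    (h : ∀ v ∈ V, ∀ T : Finset ι, T.card ≤ s → ∑ i ∈ T, |v i| ≤ γ * ∑ i ∈ Tᶜ, |v i|) :
    ∀ v ∈ V, v ≠ 0 → ∀ T : Finset ι, T.card ≤ s → ∑ i ∈ T, |v i| < ∑ i ∈ Tᶜ, |v i| := by
  intro v hv hv0 T hT
  have hle := h v hv T hT
  have htotal : 0 < ∑ i ∈ T, |v i| + ∑ i ∈ Tᶜ, |v i| := by
    rw [sum_add_sum_compl]; exact sum_abs_pos_of_ne_zero hv0
  have hTc : 0 < ∑ i ∈ Tᶜ, |v i| := by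
    by_contra! hTc
    nlinarith [sum_nonneg fun i (_ : i ∈ Tᶜ) => abs_nonneg (v i)]
  calc ∑ i ∈ T, |v i| ≤ γ * ∑ i ∈ Tᶜ, |v i| := hle
    _ < ∑ i ∈ Tᶜ, |v i| := mul_lt_of_lt_one_left hTc hγ

end NullSpaceProperty

theorem stmt4_general {N : ℕ} (V : Submodule ℝ (Fin N → ℝ)) (s : ℕ) :
    (∀ v ∈ V, v ≠ 0 → ∀ T : Finset (Fin N), T.card ≤ s →
        ∑ i ∈ T, |v i| < ∑ i ∈ Tᶜ, |v i|) ↔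
      (∃ γ : ℝ, 0 < γ ∧ γ < 1 ∧ ∀ v ∈ V, ∀ T : Finset (Fin N), T.card ≤ s →
        ∑ i ∈ T, |v i| ≤ γ * ∑ i ∈ Tᶜ, |v i|) :=
  ⟨exists_nsp_constant_of_strict V s, fun ⟨_, _, hγ, h⟩ => strict_of_nsp_constant hγ h⟩

/-- **Equivalence of the two forms of the null space property for a subspace.**
A subspace `V ⊆ ℝ^N` satisfies the strict NSP of order `s` iff it satisfies the NSP of
order `s` with some constant `γ ∈ (0,1)`. -/
theorem stmt4 {N : ℕ} (V : Submodule ℝ (Fin N → ℝ)) (s : ℕ) (hs : 0 < s) :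
    (∀ v ∈ V, v ≠ 0 → ∀ T : Finset (Fin N), T.card ≤ s →
        ∑ i ∈ T, |v i| < ∑ i ∈ Tᶜ, |v i|) ↔
      (∃ γ : ℝ, 0 < γ ∧ γ < 1 ∧ ∀ v ∈ V, ∀ T : Finset (Fin N), T.card ≤ s →
        ∑ i ∈ T, |v i| ≤ γ * ∑ i ∈ Tᶜ, |v i|) :=
  stmt4_general V s
end
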